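/- Let V be a finite linearly ordered set, K a finite abstract simplicial complex on V, and c a 1-cycle of K with real coefficients whose homology class is nonzero (c is not a boundary). Then the minimum cardinality of a homological edge cut for c equals the minimum of ‖φ‖_0 over all 1-cochains φ : K^(1) → ℝ satisfying φ(∂_2 σ) = 0 for every 2-simplex σ ∈ K^(2) and φ(c) = 1, where ‖φ‖_0 denotes the number of edges e ∈ K^(1) with φ(e) ≠ 0. Moreover, the support of any 1-cochain attaining this minimum is a minimum homological edge cut for c. -/

import Mathlib

open Finset

variable {V : Type*} [Fintype V] [LinearOrder V]

/-- `K` is a finite abstract simplicial complex on `V`: a collection of nonempty finite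
subsets of `V` closed under passing to nonempty subsets. -/
def IsComplex (K : Finset (Finset V)) : Prop :=
  (∀ σ ∈ K, σ.Nonempty) ∧ ∀ σ ∈ K, ∀ τ ⊆ σ, τ.Nonempty → τ ∈ K

/-- The set `K^(p)` of `p`-simplices of `K` (members of cardinality `p+1`). -/
def pSimplices (K : Finset (Finset V)) (p : ℕ) : Finset (Finset V) :=
  K.filter fun σ => σ.card = p + 1

/-- The indicator `p`-chain of a `p`-simplex `σ`. -/
def ind (F : Type*) [Zero F] [One F] (σ : Finset V) : Finset V → F :=
  fun τ => if τ = σ then 1 else 0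

/-- The simplicial boundary operator on chains (with respect to the linear order on `V`):
the indicator of a simplex `{v_0 < … < v_p}` is sent to
`Σ_{i} (−1)^i · indicator of {v_0,…,v_p} \ {v_i}`.  Equivalently, the coefficient of a
chain's boundary at a face `σ` is `Σ_{v ∉ σ} (−1)^{#{u ∈ σ : u < v}} · c (σ ∪ {v})`. -/
def bdry {F : Type*} [CommRing F] (c : Finset V → F) : Finset V → F :=
  fun σ => ∑ v ∈ σᶜ, (-1 : F) ^ (σ.filter fun u => u < v).card * c (insert v σ)

/-- Evaluation of a cochain `φ` on a chain `c`, extended bilinearly. -/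
def evalC {F : Type*} [CommRing F] (φ c : Finset V → F) : F :=
  ∑ σ : Finset V, φ σ * c σ

/-- `c` is a `p`-chain of `K`: it is supported on the `p`-simplices of `K`. -/
def suppIn {F : Type*} [Zero F] (K : Finset (Finset V)) (p : ℕ) (c : Finset V → F) : Prop :=
  ∀ σ : Finset V, c σ ≠ 0 → σ ∈ K ∧ σ.card = p + 1

/-- `c` is a `p`-cycle of `K`. -/
def IsCycleOf {F : Type*} [CommRing F] (K : Finset (Finset V)) (p : ℕ)
    (c : Finset V → F) : Prop :=
  suppIn K p c ∧ bdry c = 0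

/-- Two `p`-chains are homologous in `K` if their difference is the boundary of a
`(p+1)`-chain of `K`. -/
def HomologousIn {F : Type*} [CommRing F] (K : Finset (Finset V)) (p : ℕ)
    (c₁ c₂ : Finset V → F) : Prop :=
  ∃ b : Finset V → F, suppIn K (p + 1) b ∧ c₁ - c₂ = bdry b

/-- `K − C`: the subcomplex of all simplices of `K` having no subset belonging to `C`. -/
def deleteSimps (K C : Finset (Finset V)) : Finset (Finset V) :=
  K.filter fun σ => ∀ τ ∈ C, ¬ τ ⊆ σ

/-- `C` is a homological cut for the 1-cycle `c`: no 1-cycle of `K − C` is homologous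
to `c` in `K`. -/
def IsHomCut {F : Type*} [CommRing F] (K C : Finset (Finset V)) (c : Finset V → F) : Prop :=
  ¬ ∃ z : Finset V → F, IsCycleOf (deleteSimps K C) 1 z ∧ HomologousIn K 1 z c

/-! A cochain `φ` that vanishes on the boundaries of 2-simplices and has `φ(c) = 1` vanishes on
every boundary and on every 1-chain avoiding its support, so its support is a homological cut.
Conversely, if `C` is a cut then `c` lies outside the span of the boundaries of 2-simplices and
the edges of `K − C`; a linear functional vanishing on that span and equal to `1` at `c` is such
a cochain, supported in `C`. So each minimisation problem dominates the other. -/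

section Boundary

variable {F : Type*} [CommRing F]

omit [Fintype V] in
lemma card_filter_lt_insert (σ : Finset V) {v : V} (hv : v ∉ σ) (w : V) :
    ((insert v σ).filter fun u => u < w).card =
      (σ.filter fun u => u < w).card + if v < w then 1 else 0 := by
  rw [filter_insert]
  split_ifs
  · rw [card_insert_of_notMem (by simp [hv])]
  · simp

theorem bdry_bdry (b : Finset V → F) : bdry (bdry b) = 0 := by
  funext σ
  simp only [bdry, mul_sum, Pi.zero_apply]
  rw [sum_sigma']
  -- Deleting `v` then `w` and deleting `w` then `v` contribute with opposite signs.
  refine sum_involution (fun p _ => ⟨p.2, p.1⟩) ?_ ?_ ?_ fun _ _ => rfl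
  · rintro ⟨v, w⟩ hp
    simp only [mem_sigma, mem_compl, mem_insert, not_or] at hp
    obtain ⟨hv, hwv, hw⟩ := hp
    rw [card_filter_lt_insert σ hv, card_filter_lt_insert σ hw, insert_comm w v σ]
    rcases lt_or_gt_of_ne hwv with h | h
    · rw [if_pos h, if_neg (asymm h)]; ring
    · rw [if_neg (asymm h), if_pos h]; ring
  · rintro ⟨v, w⟩ hp - h
    simp only [mem_sigma, mem_compl, mem_insert, not_or] at hp
    exact hp.2.1 (congrArg Sigma.fst h)
  · rintro ⟨v, w⟩ hp
    simp only [mem_sigma, mem_compl, mem_insert, not_or] at hp ⊢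
    exact ⟨hp.2.2, Ne.symm hp.2.1, hp.1⟩

variable (F) in
def bdryₗ : (Finset V → F) →ₗ[F] (Finset V → F) where
  toFun := bdry
  map_add' a b := by ext σ; simp [bdry, mul_add, sum_add_distrib]
  map_smul' r a := by ext σ; simp [bdry, mul_sum, mul_left_comm]

@[simp]
lemma bdryₗ_apply (b : Finset V → F) : bdryₗ F b = bdry b := rfl

lemma bdry_neg (b : Finset V → F) : bdry (-b) = -bdry b := map_neg (bdryₗ F) b

lemma bdry_sub (a b : Finset V → F) : bdry (a - b) = bdry a - bdry b := map_sub (bdryₗ F) a b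

omit [LinearOrder V] in
lemma evalC_eq_dotProduct (φ c : Finset V → F) : evalC φ c = φ ⬝ᵥ c := rfl

lemma evalC_ind (φ : Finset V → F) (σ : Finset V) : evalC φ (ind F σ) = φ σ := by
  simp [evalC, ind]

omit [LinearOrder V] in
lemma evalC_sub (φ a b : Finset V → F) : evalC φ (a - b) = evalC φ a - evalC φ b :=
  dotProduct_sub φ a b

lemma evalC_bdry (φ b : Finset V → F) :
    evalC φ (bdry b) = ∑ σ, b σ * evalC φ (bdry (ind F σ)) := by
  have hind (σ : Finset V) : (fun τ => if σ = τ then (1 : F) else 0) = ind F σ := by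
    funext τ; simp [ind, eq_comm]
  simpa [hind, evalC_eq_dotProduct] using
    ((dotProductEquiv F _ φ).comp (bdryₗ F)).pi_apply_eq_sum_univ b

end Boundary

section Cochains

variable {F : Type*} [CommRing F] {K C : Finset (Finset V)} {φ c : Finset V → F}

variable (F) in
def chainsOn (S : Finset (Finset V)) : Submodule F (Finset V → F) where
  carrier := {c | ∀ σ, c σ ≠ 0 → σ ∈ S}
  add_mem' {a b} ha hb σ h := by
    by_contra hσ
    simp [of_not_not (mt (ha σ) hσ), of_not_not (mt (hb σ) hσ)] at h
  zero_mem' σ h := absurd rfl h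
  smul_mem' r a ha σ h := ha σ (right_ne_zero_of_mul h)

omit [Fintype V] in
lemma suppIn_iff_mem_chainsOn {p : ℕ} {b : Finset V → F} :
    suppIn K p b ↔ b ∈ chainsOn F (pSimplices K p) := by
  simp [suppIn, chainsOn, pSimplices]

omit [Fintype V] in
lemma ind_mem_chainsOn {S : Finset (Finset V)} {σ : Finset V} (hσ : σ ∈ S) :
    ind F σ ∈ chainsOn F S := by
  intro τ hτ
  by_cases h : τ = σ
  · exact h ▸ hσ
  · simp [ind, h] at hτ

variable (K) in
def IsCocycle (φ : Finset V → F) : Prop :=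
  ∀ σ ∈ pSimplices K 2, evalC φ (bdry (ind F σ)) = 0

variable (K) in
def cochainSupport [DecidableEq F] (φ : Finset V → F) : Finset (Finset V) :=
  (pSimplices K 1).filter fun e => φ e ≠ 0

lemma IsCocycle.evalC_bdry_eq_zero (hφ : IsCocycle K φ) {b : Finset V → F}
    (hb : suppIn K 2 b) : evalC φ (bdry b) = 0 := by
  rw [evalC_bdry]
  refine sum_eq_zero fun σ _ => ?_
  by_cases hσ : b σ = 0
  · rw [hσ, zero_mul]
  · obtain ⟨hσK, hσ2⟩ := hb σ hσ
    rw [hφ σ (mem_filter.2 ⟨hσK, hσ2⟩), mul_zero]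

lemma evalC_eq_zero_of_suppIn_deleteSimps [DecidableEq F] {z : Finset V → F}
    (hz : suppIn (deleteSimps K (cochainSupport K φ)) 1 z) : evalC φ z = 0 := by
  refine sum_eq_zero fun σ _ => ?_
  by_cases hσ : z σ = 0
  · rw [hσ, mul_zero]
  · obtain ⟨hσdel, hσ1⟩ := hz σ hσ
    obtain ⟨hσK, hσC⟩ := mem_filter.1 hσdel
    by_contra hφσ
    have hσφ : σ ∈ cochainSupport K φ :=
      mem_filter.2 ⟨mem_filter.2 ⟨hσK, hσ1⟩, left_ne_zero_of_mul hφσ⟩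
    exact hσC σ hσφ subset_rfl

theorem isHomCut_cochainSupport [Nontrivial F] [DecidableEq F] (hφ : IsCocycle K φ)
    (hφc : evalC φ c = 1) :
    IsHomCut K (cochainSupport K φ) c := by
  rintro ⟨z, ⟨hz, -⟩, b, hb, hzc⟩
  have hval := congrArg (evalC φ) hzc
  rw [evalC_sub, evalC_eq_zero_of_suppIn_deleteSimps hz, hφc, hφ.evalC_bdry_eq_zero hb] at hval
  norm_num at hval

lemma mem_pSimplices_deleteSimps {e : Finset V} (hC : C ⊆ pSimplices K 1)
    (he : e ∈ pSimplices K 1) (heC : e ∉ C) : e ∈ pSimplices (deleteSimps K C) 1 := by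
  obtain ⟨heK, he1⟩ := mem_filter.1 he
  refine mem_filter.2 ⟨mem_filter.2 ⟨heK, fun τ hτ hτe => heC ?_⟩, he1⟩
  have hτ1 := (mem_filter.1 (hC hτ)).2
  rwa [← eq_of_subset_of_card_le hτe (by omega)]

end Cochains

section Field

variable {F : Type*} [Field F] [DecidableEq F] {K C : Finset (Finset V)} {c : Finset V → F}

theorem exists_cocycle_of_isHomCut (hC : C ⊆ pSimplices K 1) (hc : bdry c = 0)
    (hcut : IsHomCut K C c) :
    ∃ φ, IsCocycle K φ ∧ evalC φ c = 1 ∧ cochainSupport K φ ⊆ C := by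
  set W := (chainsOn F (pSimplices K 2)).map (bdryₗ F) ⊔
    chainsOn F (pSimplices (deleteSimps K C) 1)
  -- A decomposition `c = ∂b + z` would make `z` a cycle of `K − C` homologous to `c`.
  have hcW : c ∉ W := by
    intro hmem
    obtain ⟨_, ⟨b, hb, rfl⟩, z, hz, hbz⟩ := Submodule.mem_sup.1 hmem
    have hzc : z = c - bdry b := by rw [← hbz]; simp
    refine hcut ⟨z, ⟨suppIn_iff_mem_chainsOn.2 hz, ?_⟩, -b, ?_, ?_⟩
    · rw [hzc, bdry_sub, hc, bdry_bdry, sub_zero]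
    · simpa [suppIn] using suppIn_iff_mem_chainsOn.2 hb
    · rw [hzc, bdry_neg]; abel
  obtain ⟨f, hfW, hfc⟩ := LinearMap.exists_extend_of_notMem (0 : W →ₗ[F] F) hcW 1
  have hf0 : ∀ x ∈ W, f x = 0 := fun x hx => LinearMap.congr_fun hfW ⟨x, hx⟩
  set φ := (dotProductEquiv F _).symm f
  have hφ : ∀ x, evalC φ x = f x := fun x =>
    LinearMap.congr_fun ((dotProductEquiv F _).apply_symm_apply f) x
  refine ⟨φ, fun σ hσ => ?_, (hφ c).trans hfc, fun e he => ?_⟩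
  · rw [hφ]
    exact hf0 _ (Submodule.mem_sup_left ⟨_, ind_mem_chainsOn hσ, rfl⟩)
  · obtain ⟨he1, hφe⟩ := mem_filter.1 he
    by_contra heC
    refine hφe ?_
    have := hf0 _ (Submodule.mem_sup_right
      (ind_mem_chainsOn (F := F) (mem_pSimplices_deleteSimps hC he1 heC)))
    rwa [← hφ, evalC_ind] at this

theorem sInf_card_isHomCut_eq_sInf_card_cochainSupport (hc : bdry c = 0) :
    sInf {n | ∃ C, C ⊆ pSimplices K 1 ∧ IsHomCut K C c ∧ C.card = n} =
      sInf {n | ∃ φ, IsCocycle K φ ∧ evalC φ c = 1 ∧ (cochainSupport K φ).card = n} := by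
  refine csInf_eq_csInf_of_forall_exists_le ?_ ?_
  · rintro _ ⟨C, hCK, hcut, rfl⟩
    obtain ⟨φ, hφ, hφc, hφC⟩ := exists_cocycle_of_isHomCut hCK hc hcut
    exact ⟨_, ⟨φ, hφ, hφc, rfl⟩, card_le_card hφC⟩
  · rintro _ ⟨φ, hφ, hφc, rfl⟩
    exact ⟨_, ⟨_, filter_subset _ _, isHomCut_cochainSupport hφ hφc, rfl⟩, le_rfl⟩

end Field

theorem stmt_9_general {V : Type*} [Fintype V] [LinearOrder V]
    (K : Finset (Finset V)) (c : Finset V → ℝ) (hc : IsCycleOf K 1 c) :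
    sInf { n : ℕ | ∃ C : Finset (Finset V),
        C ⊆ pSimplices K 1 ∧ IsHomCut K C c ∧ C.card = n } =
      sInf { n : ℕ | ∃ φ : Finset V → ℝ,
        (∀ σ ∈ pSimplices K 2, evalC φ (bdry (ind ℝ σ)) = 0) ∧ evalC φ c = 1 ∧
        ((pSimplices K 1).filter fun e => φ e ≠ 0).card = n } ∧
    ∀ φ : Finset V → ℝ,
      (∀ σ ∈ pSimplices K 2, evalC φ (bdry (ind ℝ σ)) = 0) → evalC φ c = 1 →
      ((pSimplices K 1).filter fun e => φ e ≠ 0).card =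
        sInf { n : ℕ | ∃ φ' : Finset V → ℝ,
          (∀ σ ∈ pSimplices K 2, evalC φ' (bdry (ind ℝ σ)) = 0) ∧ evalC φ' c = 1 ∧
          ((pSimplices K 1).filter fun e => φ' e ≠ 0).card = n } →
      (IsHomCut K ((pSimplices K 1).filter fun e => φ e ≠ 0) c ∧
        ((pSimplices K 1).filter fun e => φ e ≠ 0).card =
          sInf { n : ℕ | ∃ C : Finset (Finset V),
            C ⊆ pSimplices K 1 ∧ IsHomCut K C c ∧ C.card = n }) := by
  have hmin := sInf_card_isHomCut_eq_sInf_card_cochainSupport (K := K) hc.2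
  exact ⟨hmin, fun φ hφ hφc hopt =>
    ⟨isHomCut_cochainSupport hφ hφc, hopt.trans hmin.symm⟩⟩

/-- Proposition 6.2, PROP:ell0.
Let `K` be a finite abstract simplicial complex on a finite linearly ordered set `V` and `c`
a 1-cycle of `K` over `ℝ` whose homology class is nonzero (`c` is not a boundary).  Then the
minimum cardinality of a homological edge cut for `c` equals the minimum of `‖φ‖_0` over all
1-cochains `φ` with `φ(∂_2 σ) = 0` for every `σ ∈ K^(2)` and `φ(c) = 1`, where `‖φ‖_0` is
the number of edges `e ∈ K^(1)` with `φ e ≠ 0`.  Moreover, the support of any 1-cochain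
attaining this minimum is a minimum homological edge cut for `c`. -/
theorem stmt_9 {V : Type*} [Fintype V] [LinearOrder V]
    (K : Finset (Finset V)) (hK : IsComplex K) (c : Finset V → ℝ) (hc : IsCycleOf K 1 c)
    (hnb : ¬ ∃ b : Finset V → ℝ, suppIn K 2 b ∧ bdry b = c) :
    sInf { n : ℕ | ∃ C : Finset (Finset V),
        C ⊆ pSimplices K 1 ∧ IsHomCut K C c ∧ C.card = n } =
      sInf { n : ℕ | ∃ φ : Finset V → ℝ,
        (∀ σ ∈ pSimplices K 2, evalC φ (bdry (ind ℝ σ)) = 0) ∧ evalC φ c = 1 ∧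
        ((pSimplices K 1).filter fun e => φ e ≠ 0).card = n } ∧
    ∀ φ : Finset V → ℝ,
      (∀ σ ∈ pSimplices K 2, evalC φ (bdry (ind ℝ σ)) = 0) → evalC φ c = 1 →
      ((pSimplices K 1).filter fun e => φ e ≠ 0).card =
        sInf { n : ℕ | ∃ φ' : Finset V → ℝ,
          (∀ σ ∈ pSimplices K 2, evalC φ' (bdry (ind ℝ σ)) = 0) ∧ evalC φ' c = 1 ∧
          ((pSimplices K 1).filter fun e => φ' e ≠ 0).card = n } →
      (IsHomCut K ((pSimplices K 1).filter fun e => φ e ≠ 0) c ∧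
        ((pSimplices K 1).filter fun e => φ e ≠ 0).card =
          sInf { n : ℕ | ∃ C : Finset (Finset V),
            C ⊆ pSimplices K 1 ∧ IsHomCut K C c ∧ C.card = n }) :=
  stmt_9_general K c hc
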